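/- Let u be a recurrent infinite word and m a natural number. Suppose that for every n at least one of the following holds: (i) there is a unique left special factor w of u of length n, and #E_ℓ(w) = m; (ii) there is a unique right special factor w of u of length n, and #E_r(w) = m. Then u satisfies property R_m, i.e., every factor of u has exactly m return words. -/

import Mathlib

/-!
A factor that is not right special has a unique right extension, which occurs exactly where the
factor does. A right special factor other than the distinguished special factor of its length is
not left special, so it has a unique left extension, whose occurrences are shifted by one place
and whose return words are the conjugates of its own. The distinguished factor itself has exactly
`m` return words: two occurrences of a unique right (left) special factor followed (preceded) by
the same letter agree up to the next (previous) occurrence, so its return words correspond to its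
extension letters. Hence a factor `w` without `m` return words extends forever to longer such
factors, each occurring exactly at the occurrences of `w` moved left by some shift; whether the
shifts stay bounded or not, this forces `u` to be eventually periodic, and a recurrent eventually
periodic word has no long special factors.
-/

variable {A : Type*}

/-- The factor of `u` of length `n` starting at position `j`. -/
def factorAt (u : ℕ → A) (j n : ℕ) : List A :=
  (List.range n).map (fun i => u (j + i))

/-- `j` is an occurrence of the finite word `w` in `u`. -/
def OccursAt (u : ℕ → A) (w : List A) (j : ℕ) : Prop :=
  factorAt u j w.length = w

/-- `w` is a factor of the infinite word `u`. -/
def IsFactor (u : ℕ → A) (w : List A) : Prop :=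
  ∃ j, OccursAt u w j

/-- `v` is a return word of `w` in `u`: the word between two successive occurrences of `w`. -/
def IsReturnWord (u : ℕ → A) (w v : List A) : Prop :=
  ∃ j k, j < k ∧ OccursAt u w j ∧ OccursAt u w k ∧
    (∀ l, j < l → l < k → ¬ OccursAt u w l) ∧ v = factorAt u j (k - j)

/-- The set `R(w)` of return words of `w` in `u`. -/
def returnWords (u : ℕ → A) (w : List A) : Set (List A) :=
  {v | IsReturnWord u w v}

/-- Property `R_m`: every factor of `u` has exactly `m` return words. -/
def PropertyR (u : ℕ → A) (m : ℕ) : Prop :=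
  ∀ w, IsFactor u w → (returnWords u w).Finite ∧ (returnWords u w).ncard = m

/-- The set of left extensions of `w`. -/
def leftExt (u : ℕ → A) (w : List A) : Set A := {a | IsFactor u (a :: w)}

/-- The set of right extensions of `w`. -/
def rightExt (u : ℕ → A) (w : List A) : Set A := {b | IsFactor u (w ++ [b])}

def LeftSpecial (u : ℕ → A) (w : List A) : Prop := 2 ≤ (leftExt u w).ncard

def RightSpecial (u : ℕ → A) (w : List A) : Prop := 2 ≤ (rightExt u w).ncard

/-- The set of pairs `(a, b)` such that `a w b` is a factor of `u`. -/
def extPairs (u : ℕ → A) (w : List A) : Set (A × A) :=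
  {p | IsFactor u (p.1 :: (w ++ [p.2]))}

/-- The bilateral order `B(w)`. -/
noncomputable def bilateralOrder (u : ℕ → A) (w : List A) : ℤ :=
  ((extPairs u w).ncard : ℤ) - (leftExt u w).ncard - (rightExt u w).ncard + 1

/-- `w` is a weak bispecial factor of `u`. -/
def WeakBispecial (u : ℕ → A) (w : List A) : Prop :=
  IsFactor u w ∧ bilateralOrder u w < 0

/-- The factor complexity of `u`. -/
noncomputable def Complexity (u : ℕ → A) (n : ℕ) : ℕ :=
  {w : List A | w.length = n ∧ IsFactor u w}.ncard

/-- `u` is recurrent: every factor occurs at least twice. -/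
def Recurrent (u : ℕ → A) : Prop :=
  ∀ w, IsFactor u w → ∃ j k, j < k ∧ OccursAt u w j ∧ OccursAt u w k

/-- `u` is uniformly recurrent. -/
def UniformlyRecurrent (u : ℕ → A) : Prop :=
  ∀ n : ℕ, ∃ N : ℕ, ∀ w, IsFactor u w → w.length = N →
    ∀ v, IsFactor u v → v.length = n → v <:+: w

def EventuallyPeriodic (u : ℕ → A) : Prop :=
  ∃ p, 0 < p ∧ ∃ N, ∀ n, N ≤ n → u (n + p) = u n

/-- `w` is a maximal right special factor. -/
def MaximalRightSpecial (u : ℕ → A) (w : List A) : Prop :=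
  IsFactor u w ∧ RightSpecial u w ∧
    ∀ v, IsFactor u v → RightSpecial u v → w <:+ v → v = w

/-- The return word `v` of `w` starts with the letter `b`. -/
def StartsWithLetter (w v : List A) (b : A) : Prop := (w ++ [b]) <+: (v ++ w)

section Factors

variable {u : ℕ → A}

@[simp]
theorem length_factorAt (u : ℕ → A) (j n : ℕ) : (factorAt u j n).length = n := by
  simp [factorAt]

@[simp]
theorem getElem_factorAt (u : ℕ → A) {j n i : ℕ} (hi : i < (factorAt u j n).length) :
    (factorAt u j n)[i] = u (j + i) := by
  simp [factorAt]

theorem factorAt_eq_factorAt_iff {j j' n : ℕ} :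
    factorAt u j n = factorAt u j' n ↔ ∀ i < n, u (j + i) = u (j' + i) := by
  simp [factorAt, List.map_inj_left]

theorem factorAt_eq_factorAt_of_le {j j' n n' : ℕ} (h : factorAt u j n = factorAt u j' n)
    (hn : n' ≤ n) : factorAt u j n' = factorAt u j' n' := by
  rw [factorAt_eq_factorAt_iff] at h ⊢
  exact fun i hi => h i (by omega)

theorem factorAt_succ (u : ℕ → A) (j n : ℕ) :
    factorAt u j (n + 1) = factorAt u j n ++ [u (j + n)] := by
  simp [factorAt, List.range_succ]

theorem factorAt_succ' (u : ℕ → A) (j n : ℕ) :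
    factorAt u j (n + 1) = u j :: factorAt u (j + 1) n := by
  simp [factorAt, List.range_succ_eq_map, Nat.add_assoc, Nat.add_comm 1]

theorem factorAt_succ_eq_factorAt_succ_iff {j j' n : ℕ} :
    factorAt u j (n + 1) = factorAt u j' (n + 1) ↔
      factorAt u j n = factorAt u j' n ∧ u (j + n) = u (j' + n) := by
  simp [factorAt_succ]

theorem factorAt_succ_eq_factorAt_succ_iff' {j j' n : ℕ} :
    factorAt u j (n + 1) = factorAt u j' (n + 1) ↔
      u j = u j' ∧ factorAt u (j + 1) n = factorAt u (j' + 1) n := by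
  simp [factorAt_succ']

theorem factorAt_rotate_one {j n : ℕ} (h : u j = u (j + n)) :
    (factorAt u j n).rotate 1 = factorAt u (j + 1) n := by
  cases n with
  | zero => rfl
  | succ n =>
    rw [factorAt_succ', List.rotate_cons_succ, List.rotate_zero, factorAt_succ, h]
    congr 3
    omega

theorem occursAt_iff {w : List A} {j : ℕ} :
    OccursAt u w j ↔ ∀ i (hi : i < w.length), w[i] = u (j + i) := by
  simp only [OccursAt, List.ext_get_iff, length_factorAt, true_and, List.get_eq_getElem,
    getElem_factorAt]
  exact ⟨fun h i hi => (h i hi hi).symm, fun h i hi _ => (h i hi).symm⟩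

theorem OccursAt.getElem_eq {w : List A} {j i : ℕ} (h : OccursAt u w j) (hi : i < w.length) :
    w[i] = u (j + i) :=
  occursAt_iff.mp h i hi

theorem occursAt_factorAt (u : ℕ → A) (j n : ℕ) : OccursAt u (factorAt u j n) j := by
  rw [OccursAt, length_factorAt]

theorem isFactor_factorAt (u : ℕ → A) (j n : ℕ) : IsFactor u (factorAt u j n) :=
  ⟨j, occursAt_factorAt u j n⟩

theorem OccursAt.factorAt_eq {w : List A} {j j' : ℕ} (h : OccursAt u w j)
    (h' : OccursAt u w j') : factorAt u j w.length = factorAt u j' w.length :=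
  h.trans h'.symm

theorem occursAt_iff_of_factorAt_eq {x : List A} {j j' L s : ℕ}
    (hV : factorAt u j L = factorAt u j' L) (hs : s + x.length ≤ L) :
    OccursAt u x (j + s) ↔ OccursAt u x (j' + s) := by
  rw [factorAt_eq_factorAt_iff] at hV
  simp only [occursAt_iff]
  refine forall₂_congr fun i hi => ?_
  rw [show j + s + i = j + (s + i) by omega, show j' + s + i = j' + (s + i) by omega,
    hV (s + i) (by omega)]

theorem occursAt_iff_of_factorAt_eq' {x : List A} {j j' L : ℕ}
    (hV : factorAt u j L = factorAt u j' L) (hx : x.length ≤ L) :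
    OccursAt u x j ↔ OccursAt u x j' := by
  simpa using occursAt_iff_of_factorAt_eq hV (s := 0) (by simpa using hx)

theorem occursAt_append_iff {x y : List A} {j : ℕ} :
    OccursAt u (x ++ y) j ↔ OccursAt u x j ∧ OccursAt u y (j + x.length) := by
  simp only [occursAt_iff, List.length_append]
  constructor
  · intro h
    refine ⟨fun i hi => ?_, fun i hi => ?_⟩
    · simpa [List.getElem_append_left hi] using h i (by omega)
    · simpa [Nat.add_assoc] using h (x.length + i) (by omega)
  · intro ⟨hx, hy⟩ i hi
    by_cases hix : i < x.length
    · rw [List.getElem_append_left hix, hx i hix]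
    · rw [List.getElem_append_right (by omega), hy _ (by omega)]
      congr 1
      omega

theorem occursAt_singleton_iff {a : A} {j : ℕ} : OccursAt u [a] j ↔ u j = a := by
  simp [OccursAt, factorAt]

theorem occursAt_append_singleton_iff {z : List A} {b : A} {j : ℕ} :
    OccursAt u (z ++ [b]) j ↔ OccursAt u z j ∧ u (j + z.length) = b := by
  rw [occursAt_append_iff, occursAt_singleton_iff]

theorem occursAt_cons_iff {a : A} {z : List A} {j : ℕ} :
    OccursAt u (a :: z) j ↔ u j = a ∧ OccursAt u z (j + 1) := by
  rw [← List.singleton_append, occursAt_append_iff, occursAt_singleton_iff]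
  rfl

end Factors

section ReturnWords

variable {u : ℕ → A}

def SuccessiveOcc (u : ℕ → A) (w : List A) (j k : ℕ) : Prop :=
  j < k ∧ OccursAt u w j ∧ OccursAt u w k ∧ ∀ l, j < l → l < k → ¬ OccursAt u w l

theorem mem_returnWords_iff {w v : List A} :
    v ∈ returnWords u w ↔ ∃ j k, SuccessiveOcc u w j k ∧ v = factorAt u j (k - j) := by
  simp only [returnWords, IsReturnWord, SuccessiveOcc, Set.mem_ofPred_eq, and_assoc]

theorem returnWords_congr {z z' : List A} (h : ∀ p, OccursAt u z p ↔ OccursAt u z' p) :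
    returnWords u z = returnWords u z' := by
  have : OccursAt u z = OccursAt u z' := funext fun p => propext (h p)
  simp only [returnWords, IsReturnWord, this]

theorem exists_successiveOcc_from {w : List A} {j k : ℕ} (hj : OccursAt u w j)
    (hk : OccursAt u w k) (hjk : j < k) : ∃ k', SuccessiveOcc u w j k' := by
  classical
  have hex : ∃ d, OccursAt u w (j + 1 + d) := ⟨k - (j + 1), by rwa [Nat.add_sub_cancel' hjk]⟩
  refine ⟨j + 1 + Nat.find hex, by omega, hj, Nat.find_spec hex, fun l hjl hlk hl => ?_⟩
  exact Nat.find_min hex (m := l - (j + 1)) (by omega) (by rwa [Nat.add_sub_cancel' hjl])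

theorem exists_successiveOcc_to {w : List A} {j k : ℕ} (hj : OccursAt u w j)
    (hk : OccursAt u w k) (hjk : j < k) : ∃ j', SuccessiveOcc u w j' k := by
  classical
  refine ⟨Nat.findGreatest (OccursAt u w) (k - 1), ?_, Nat.findGreatest_spec (by omega) hj, hk,
    fun l hjl hlk hl => ?_⟩
  · have := Nat.findGreatest_le (P := OccursAt u w) (k - 1)
    omega
  · have := Nat.le_findGreatest (P := OccursAt u w) (by omega : l ≤ k - 1) hl
    omega

theorem Recurrent.exists_occursAt_ge {w : List A} (hrec : Recurrent u) (hw : IsFactor u w)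
    (N : ℕ) : ∃ j, N ≤ j ∧ OccursAt u w j := by
  induction N with
  | zero => exact hw.imp fun j hj => ⟨Nat.zero_le j, hj⟩
  | succ N ih =>
    obtain ⟨j, hjN, hj⟩ := ih
    -- a second occurrence of the prefix of `u` ending with `w` carries a later copy of `w`
    obtain ⟨i, k, hik, -, hk⟩ := hrec _ (isFactor_factorAt u 0 (j + w.length))
    have hV := (occursAt_factorAt u 0 _).factorAt_eq hk
    rw [length_factorAt] at hV
    exact ⟨k + j, by omega, (occursAt_iff_of_factorAt_eq hV le_rfl).mp (by simpa using hj)⟩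

theorem Recurrent.exists_successiveOcc_ge {w : List A} {j k : ℕ} (hrec : Recurrent u)
    (h : SuccessiveOcc u w j k) (N : ℕ) : ∃ j', N ≤ j' ∧
      SuccessiveOcc u w j' (j' + (k - j)) ∧ factorAt u j' (k - j) = factorAt u j (k - j) := by
  obtain ⟨hjk, hj, hk, hfree⟩ := h
  obtain ⟨j', hj'N, hj'⟩ :=
    hrec.exists_occursAt_ge (isFactor_factorAt u j (k - j + w.length)) N
  have hV := (occursAt_factorAt u j _).factorAt_eq hj'
  rw [length_factorAt] at hV
  have htransfer : ∀ s ≤ k - j, OccursAt u w (j + s) ↔ OccursAt u w (j' + s) :=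
    fun s hs => occursAt_iff_of_factorAt_eq hV (by omega)
  refine ⟨j', hj'N, ⟨by omega, ?_, ?_, fun l hl hl' hocc => ?_⟩,
    (factorAt_eq_factorAt_of_le hV (by omega)).symm⟩
  · exact (occursAt_iff_of_factorAt_eq' hV (by omega)).mp hj
  · exact (htransfer (k - j) le_rfl).mp (by rwa [Nat.add_sub_cancel' hjk.le])
  · refine hfree (j + (l - j')) (by omega) (by omega) ((htransfer (l - j') (by omega)).mpr ?_)
    rwa [Nat.add_sub_cancel' hl.le]

theorem Recurrent.exists_occursAt_pair_ge {w : List A} (hrec : Recurrent u) (hw : IsFactor u w) :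
    ∃ d, 0 < d ∧ ∀ N, ∃ q, N ≤ q ∧ OccursAt u w q ∧ OccursAt u w (q + d) := by
  obtain ⟨j, k, hjk, hj, hk⟩ := hrec w hw
  refine ⟨k - j, by omega, fun N => ?_⟩
  obtain ⟨q, hqN, hq⟩ := hrec.exists_occursAt_ge (isFactor_factorAt u j (k - j + w.length)) N
  have hV := (occursAt_factorAt u j _).factorAt_eq hq
  rw [length_factorAt] at hV
  refine ⟨q, hqN, ?_, ?_⟩
  · exact (occursAt_iff_of_factorAt_eq' hV (by omega)).mp hj
  · exact (occursAt_iff_of_factorAt_eq hV le_rfl).mp (by rwa [Nat.add_sub_cancel' hjk.le])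

end ReturnWords

section UniqueSpecial

variable {u : ℕ → A} [Finite A]

theorem rightSpecial_of_ne {x : List A} {p p' : ℕ} (hp : OccursAt u x p)
    (hp' : OccursAt u x p') (hne : u (p + x.length) ≠ u (p' + x.length)) : RightSpecial u x :=
  (Set.one_lt_ncard (Set.toFinite _)).mpr ⟨_, ⟨p, occursAt_append_singleton_iff.mpr ⟨hp, rfl⟩⟩,
    _, ⟨p', occursAt_append_singleton_iff.mpr ⟨hp', rfl⟩⟩, hne⟩

theorem leftSpecial_of_ne {x : List A} {p p' : ℕ} (hp : OccursAt u x (p + 1))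
    (hp' : OccursAt u x (p' + 1)) (hne : u p ≠ u p') : LeftSpecial u x :=
  (Set.one_lt_ncard (Set.toFinite _)).mpr ⟨_, ⟨p, occursAt_cons_iff.mpr ⟨rfl, hp⟩⟩,
    _, ⟨p', occursAt_cons_iff.mpr ⟨rfl, hp'⟩⟩, hne⟩

theorem factorAt_eq_of_unique_rightSpecial {r : List A}
    (huniq : ∀ v, IsFactor u v → v.length = r.length → RightSpecial u v → v = r)
    {p p' d : ℕ} (hp : OccursAt u r p) (hp' : OccursAt u r p')
    (hb : u (p + r.length) = u (p' + r.length))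
    (hfree : ∀ l, p < l → l ≤ p + d → ¬ OccursAt u r l) :
    factorAt u p (d + 1 + r.length) = factorAt u p' (d + 1 + r.length) := by
  induction d with
  | zero =>
    rw [zero_add, add_comm, factorAt_succ_eq_factorAt_succ_iff]
    exact ⟨hp.factorAt_eq hp', hb⟩
  | succ d ih =>
    have hV := ih fun l hl hl' => hfree l hl (by omega)
    set x := factorAt u (p + (d + 1)) r.length
    have hx : OccursAt u x (p + (d + 1)) := occursAt_factorAt _ _ _
    have hx' : OccursAt u x (p' + (d + 1)) :=
      (occursAt_iff_of_factorAt_eq hV (by simp [x])).mp hx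
    have hnext : u (p + (d + 1) + x.length) = u (p' + (d + 1) + x.length) := by
      by_contra hne
      have hxr : x = r := huniq x ⟨_, hx⟩ (length_factorAt ..) (rightSpecial_of_ne hx hx' hne)
      exact hfree _ (by omega) le_rfl (hxr ▸ hx)
    rw [show d + 1 + 1 + r.length = d + 1 + r.length + 1 by omega,
      factorAt_succ_eq_factorAt_succ_iff]
    refine ⟨hV, ?_⟩
    simpa [x, Nat.add_assoc] using hnext

theorem factorAt_eq_of_unique_leftSpecial {l : List A}
    (huniq : ∀ v, IsFactor u v → v.length = l.length → LeftSpecial u v → v = l)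
    {d p p' : ℕ} (hp : OccursAt u l (p + d + 1)) (hp' : OccursAt u l (p' + d + 1))
    (ha : u (p + d) = u (p' + d)) (hfree : ∀ x, p < x → x ≤ p + d → ¬ OccursAt u l x) :
    factorAt u p (d + 1 + l.length) = factorAt u p' (d + 1 + l.length) := by
  induction d generalizing p p' with
  | zero =>
    rw [zero_add, add_comm, factorAt_succ_eq_factorAt_succ_iff']
    exact ⟨ha, hp.factorAt_eq hp'⟩
  | succ d ih =>
    have hV : factorAt u (p + 1) (d + 1 + l.length) = factorAt u (p' + 1) (d + 1 + l.length) :=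
      ih (by rwa [Nat.add_right_comm p 1 d]) (by rwa [Nat.add_right_comm p' 1 d])
        (by rwa [Nat.add_right_comm p 1 d, Nat.add_right_comm p' 1 d])
        fun x hx hx' => hfree x (by omega) (by omega)
    set x := factorAt u (p + 1) l.length
    have hx : OccursAt u x (p + 1) := occursAt_factorAt _ _ _
    have hx' : OccursAt u x (p' + 1) := (occursAt_iff_of_factorAt_eq' hV (by simp [x])).mp hx
    have hprev : u p = u p' := by
      by_contra hne
      have hxl : x = l := huniq x ⟨_, hx⟩ (length_factorAt ..) (leftSpecial_of_ne hx hx' hne)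
      exact hfree _ (by omega) (by omega) (hxl ▸ hx)
    rw [show d + 1 + 1 + l.length = d + 1 + l.length + 1 by omega,
      factorAt_succ_eq_factorAt_succ_iff']
    exact ⟨hprev, hV⟩

theorem SuccessiveOcc.eq_of_unique_rightSpecial {r : List A}
    (huniq : ∀ v, IsFactor u v → v.length = r.length → RightSpecial u v → v = r)
    {j k j' k' : ℕ} (h : SuccessiveOcc u r j k) (h' : SuccessiveOcc u r j' k')
    (hb : u (j + r.length) = u (j' + r.length)) (hle : k - j ≤ k' - j') :
    k' - j' = k - j ∧ factorAt u j (k - j) = factorAt u j' (k - j) := by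
  obtain ⟨hjk, hj, hk, hfree⟩ := h
  obtain ⟨-, hj', -, hfree'⟩ := h'
  have hV := factorAt_eq_of_unique_rightSpecial huniq hj hj' hb (d := k - j - 1)
    fun l hl hl' => hfree l hl (by omega)
  rw [show k - j - 1 + 1 = k - j by omega] at hV
  have hk' : OccursAt u r (j' + (k - j)) :=
    (occursAt_iff_of_factorAt_eq hV le_rfl).mp (by rwa [Nat.add_sub_cancel' hjk.le])
  have : ¬ j' + (k - j) < k' := (hfree' _ (by omega) · hk')
  exact ⟨by omega, factorAt_eq_factorAt_of_le hV (by omega)⟩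

theorem SuccessiveOcc.eq_of_unique_leftSpecial {l : List A}
    (huniq : ∀ v, IsFactor u v → v.length = l.length → LeftSpecial u v → v = l)
    {j k j' k' : ℕ} (h : SuccessiveOcc u l j k) (h' : SuccessiveOcc u l j' k')
    (ha : u (k - 1) = u (k' - 1)) (hle : k - j ≤ k' - j') :
    k' - j' = k - j ∧ factorAt u j (k - j) = factorAt u j' (k - j) := by
  obtain ⟨hjk, hj, hk, hfree⟩ := h
  obtain ⟨hjk', -, hk', hfree'⟩ := h'
  have hV := factorAt_eq_of_unique_leftSpecial huniq (d := k - j - 1) (p' := k' - (k - j))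
    (by rwa [show j + (k - j - 1) + 1 = k by omega])
    (by rwa [show k' - (k - j) + (k - j - 1) + 1 = k' by omega])
    (by rwa [show j + (k - j - 1) = k - 1 by omega,
      show k' - (k - j) + (k - j - 1) = k' - 1 by omega])
    fun x hx hx' => hfree x hx (by omega)
  rw [show k - j - 1 + 1 = k - j by omega] at hV
  have hj'' : OccursAt u l (k' - (k - j)) := (occursAt_iff_of_factorAt_eq' hV (by omega)).mp hj
  have : ¬ j' < k' - (k - j) := (hfree' _ · (by omega) hj'')
  have hj' : k' - (k - j) = j' := by omega
  rw [hj'] at hV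
  exact ⟨by omega, factorAt_eq_factorAt_of_le hV (by omega)⟩

theorem Recurrent.encard_returnWords_of_unique_rightSpecial (hrec : Recurrent u) {r : List A}
    (huniq : ∀ v, IsFactor u v → v.length = r.length → RightSpecial u v → v = r) :
    (returnWords u r).encard = (rightExt u r).encard := by
  -- a return word is determined by the letter that follows its leading copy of `r`
  let f : List A → Option A := fun v => (v ++ r)[r.length]?
  have hf : ∀ j k, SuccessiveOcc u r j k → f (factorAt u j (k - j)) = some (u (j + r.length)) := by
    rintro j k ⟨hjk, -, hk, -⟩
    have hocc : OccursAt u (factorAt u j (k - j) ++ r) j :=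
      occursAt_append_iff.mpr ⟨occursAt_factorAt .., by simpa [Nat.add_sub_cancel' hjk.le]⟩
    have hlen : r.length < (factorAt u j (k - j) ++ r).length := by simp; omega
    simp only [f, List.getElem?_eq_getElem hlen, hocc.getElem_eq hlen]
  have hinj : Set.InjOn f (returnWords u r) := by
    simp only [Set.InjOn, mem_returnWords_iff]
    rintro _ ⟨j, k, h, rfl⟩ _ ⟨j', k', h', rfl⟩ hff
    rw [hf j k h, hf j' k' h', Option.some_inj] at hff
    rcases le_total (k - j) (k' - j') with hle | hle
    · obtain ⟨hd, hV⟩ := h.eq_of_unique_rightSpecial huniq h' hff hle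
      rw [hd, hV]
    · obtain ⟨hd, hV⟩ := h'.eq_of_unique_rightSpecial huniq h hff.symm hle
      rw [hd, hV]
  have himage : f '' returnWords u r = some '' rightExt u r := by
    ext o
    simp only [Set.mem_image, mem_returnWords_iff]
    constructor
    · rintro ⟨_, ⟨j, k, h, rfl⟩, rfl⟩
      exact ⟨_, ⟨j, occursAt_append_singleton_iff.mpr ⟨h.2.1, rfl⟩⟩, (hf j k h).symm⟩
    · rintro ⟨b, ⟨j, hjb⟩, rfl⟩
      obtain ⟨hj, rfl⟩ := occursAt_append_singleton_iff.mp hjb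
      obtain ⟨k', hjk', hk'⟩ := hrec.exists_occursAt_ge ⟨j, hj⟩ (j + 1)
      obtain ⟨k, h⟩ := exists_successiveOcc_from hj hk' (by omega)
      exact ⟨_, ⟨j, k, h, rfl⟩, hf j k h⟩
  rw [← hinj.encard_image, himage, (Option.some_injective A).encard_image]

theorem Recurrent.encard_returnWords_of_unique_leftSpecial (hrec : Recurrent u) {l : List A}
    (huniq : ∀ v, IsFactor u v → v.length = l.length → LeftSpecial u v → v = l) :
    (returnWords u l).encard = (leftExt u l).encard := by
  -- a return word is determined by its last letter, the one preceding the next copy of `l`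
  let f : List A → Option A := List.getLast?
  have hf : ∀ j k, SuccessiveOcc u l j k → f (factorAt u j (k - j)) = some (u (k - 1)) := by
    rintro j k ⟨hjk, -⟩
    obtain ⟨d, hd⟩ : ∃ d, k - j = d + 1 := ⟨k - j - 1, by omega⟩
    simp only [f, hd, factorAt_succ, List.getLast?_concat, show j + d = k - 1 by omega]
  have hinj : Set.InjOn f (returnWords u l) := by
    simp only [Set.InjOn, mem_returnWords_iff]
    rintro _ ⟨j, k, h, rfl⟩ _ ⟨j', k', h', rfl⟩ hff
    rw [hf j k h, hf j' k' h', Option.some_inj] at hff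
    rcases le_total (k - j) (k' - j') with hle | hle
    · obtain ⟨hd, hV⟩ := h.eq_of_unique_leftSpecial huniq h' hff hle
      rw [hd, hV]
    · obtain ⟨hd, hV⟩ := h'.eq_of_unique_leftSpecial huniq h hff.symm hle
      rw [hd, hV]
  have himage : f '' returnWords u l = some '' leftExt u l := by
    ext o
    simp only [Set.mem_image, mem_returnWords_iff]
    constructor
    · rintro ⟨_, ⟨j, k, h, rfl⟩, rfl⟩
      refine ⟨_, ⟨k - 1, occursAt_cons_iff.mpr ⟨rfl, ?_⟩⟩, (hf j k h).symm⟩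
      rw [Nat.sub_add_cancel (by have := h.1; omega)]
      exact h.2.2.1
    · rintro ⟨a, ⟨q₀, hq₀⟩, rfl⟩
      obtain ⟨j, hj⟩ : IsFactor u l := ⟨q₀ + 1, (occursAt_cons_iff.mp hq₀).2⟩
      obtain ⟨q, hjq, hq⟩ := hrec.exists_occursAt_ge ⟨q₀, hq₀⟩ j
      obtain ⟨rfl, hl⟩ := occursAt_cons_iff.mp hq
      obtain ⟨i, h⟩ := exists_successiveOcc_to hj hl (by omega)
      exact ⟨_, ⟨i, q + 1, h, rfl⟩, hf i (q + 1) h⟩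
  rw [← hinj.encard_image, himage, (Option.some_injective A).encard_image]

end UniqueSpecial

section Extensions

variable {u : ℕ → A}

theorem exists_occursAt_append_singleton_iff [Finite A] {z : List A} (hz : IsFactor u z)
    (hns : ¬ RightSpecial u z) : ∃ b, ∀ p, OccursAt u (z ++ [b]) p ↔ OccursAt u z p := by
  obtain ⟨j, hj⟩ := hz
  have hsub : (rightExt u z).Subsingleton :=
    Set.ncard_le_one_iff_subsingleton.mp (by rw [RightSpecial] at hns; omega)
  refine ⟨u (j + z.length), fun p => ⟨fun hp => (occursAt_append_singleton_iff.mp hp).1,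
    fun hp => occursAt_append_singleton_iff.mpr ⟨hp, ?_⟩⟩⟩
  exact hsub ⟨p, occursAt_append_singleton_iff.mpr ⟨hp, rfl⟩⟩
    ⟨j, occursAt_append_singleton_iff.mpr ⟨hj, rfl⟩⟩

theorem Recurrent.exists_occursAt_cons_iff [Finite A] (hrec : Recurrent u) {z : List A}
    (hz : IsFactor u z) (hns : ¬ LeftSpecial u z) :
    ∃ a, ∀ p, OccursAt u (a :: z) p ↔ OccursAt u z (p + 1) := by
  obtain ⟨j, hj1, hj⟩ := hrec.exists_occursAt_ge hz 1
  obtain ⟨i, rfl⟩ : ∃ i, j = i + 1 := ⟨j - 1, by omega⟩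
  have hsub : (leftExt u z).Subsingleton :=
    Set.ncard_le_one_iff_subsingleton.mp (by rw [LeftSpecial] at hns; omega)
  refine ⟨u i, fun p => ⟨fun hp => (occursAt_cons_iff.mp hp).2,
    fun hp => occursAt_cons_iff.mpr ⟨?_, hp⟩⟩⟩
  exact hsub ⟨p, occursAt_cons_iff.mpr ⟨rfl, hp⟩⟩ ⟨i, occursAt_cons_iff.mpr ⟨rfl, hj⟩⟩

theorem successiveOcc_cons_iff {a : A} {z : List A}
    (h : ∀ p, OccursAt u (a :: z) p ↔ OccursAt u z (p + 1)) {j k : ℕ} :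
    SuccessiveOcc u (a :: z) j k ↔ SuccessiveOcc u z (j + 1) (k + 1) := by
  simp only [SuccessiveOcc, h]
  constructor
  · rintro ⟨hjk, hj, hk, hfree⟩
    refine ⟨by omega, hj, hk, fun l hl hl' hocc => hfree (l - 1) (by omega) (by omega) ?_⟩
    rwa [Nat.sub_add_cancel (by omega)]
  · rintro ⟨hjk, hj, hk, hfree⟩
    exact ⟨by omega, hj, hk, fun l hl hl' => hfree (l + 1) (by omega) (by omega)⟩

/-- The return words of `a :: z` are those of `z` with their last letter `a` moved to the
front. -/
theorem Recurrent.encard_returnWords_cons (hrec : Recurrent u) {a : A} {z : List A}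
    (h : ∀ p, OccursAt u (a :: z) p ↔ OccursAt u z (p + 1)) :
    (returnWords u (a :: z)).encard = (returnWords u z).encard := by
  have hrotate : ∀ {j k}, SuccessiveOcc u (a :: z) j k →
      (factorAt u j (k - j)).rotate 1 = factorAt u (j + 1) (k + 1 - (j + 1)) := by
    rintro j k ⟨hjk, hj, hk, -⟩
    rw [Nat.add_sub_add_right, factorAt_rotate_one]
    rw [Nat.add_sub_cancel' hjk.le, (occursAt_cons_iff.mp hj).1, (occursAt_cons_iff.mp hk).1]
  have himage : (fun v => v.rotate 1) '' returnWords u (a :: z) = returnWords u z := by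
    ext v
    simp only [Set.mem_image, mem_returnWords_iff]
    constructor
    · rintro ⟨_, ⟨j, k, hs, rfl⟩, rfl⟩
      exact ⟨j + 1, k + 1, (successiveOcc_cons_iff h).mp hs, hrotate hs⟩
    · rintro ⟨j, k, hs, rfl⟩
      -- realize the return word away from position `0`, where `a` cannot precede `z`
      obtain ⟨_ | i, hi, hs', hv⟩ := hrec.exists_successiveOcc_ge hs 1
      · omega
      rw [Nat.add_right_comm, ← successiveOcc_cons_iff h] at hs'
      refine ⟨_, ⟨i, i + (k - j), hs', rfl⟩, ?_⟩
      rw [hrotate hs', ← hv]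
      congr 1
      omega
  rw [← himage, (List.rotate_injective 1).encard_image]

end Extensions

section Periodicity

variable {u : ℕ → A} {N p : ℕ}

theorem Recurrent.rightExt_subsingleton (hrec : Recurrent u) (hp : 0 < p)
    (hper : ∀ n, N ≤ n → u (n + p) = u n) {w : List A} (hw : p ≤ w.length) :
    (rightExt u w).Subsingleton := by
  have key : ∀ b ∈ rightExt u w, b = w[w.length - p]'(by omega) := by
    intro b hb
    obtain ⟨j, hjN, hj⟩ := hrec.exists_occursAt_ge hb N
    obtain ⟨hjw, rfl⟩ := occursAt_append_singleton_iff.mp hj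
    rw [hjw.getElem_eq, show j + w.length = j + (w.length - p) + p by omega, hper _ (by omega)]
  exact fun b hb c hc => (key b hb).trans (key c hc).symm

theorem Recurrent.leftExt_subsingleton (hrec : Recurrent u) (hp : 0 < p)
    (hper : ∀ n, N ≤ n → u (n + p) = u n) {w : List A} (hw : p ≤ w.length) :
    (leftExt u w).Subsingleton := by
  have key : ∀ a ∈ leftExt u w, a = w[p - 1]'(by omega) := by
    intro a ha
    obtain ⟨j, hjN, hj⟩ := hrec.exists_occursAt_ge ha N
    obtain ⟨rfl, hjw⟩ := occursAt_cons_iff.mp hj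
    rw [hjw.getElem_eq, ← hper _ hjN]
    congr 1
    omega
  exact fun a ha b hb => (key a ha).trans (key b hb).symm

theorem Recurrent.not_eventuallyPeriodic (hrec : Recurrent u)
    (hsp : ∀ n, ∃ w : List A, w.length = n ∧ (LeftSpecial u w ∨ RightSpecial u w)) :
    ¬ EventuallyPeriodic u := by
  rintro ⟨p, hp, N, hper⟩
  obtain ⟨w, hw, hspecial⟩ := hsp p
  have hle : ∀ s : Set A, s.Subsingleton → s.ncard ≤ 1 :=
    fun s hs => (Set.ncard_le_one hs.finite).mpr fun a ha b hb => hs ha hb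
  have hleft := hle _ (hrec.leftExt_subsingleton hp hper hw.ge)
  have hright := hle _ (hrec.rightExt_subsingleton hp hper hw.ge)
  rw [LeftSpecial, RightSpecial] at hspecial
  omega

end Periodicity

section ExtensionChain

variable {u : ℕ → A} {m : ℕ}

def HasUniqueSpecialFactor (u : ℕ → A) (m n : ℕ) : Prop :=
  (∃ w, IsFactor u w ∧ w.length = n ∧ LeftSpecial u w ∧ (leftExt u w).ncard = m ∧
      ∀ v, IsFactor u v → v.length = n → LeftSpecial u v → v = w) ∨
    (∃ w, IsFactor u w ∧ w.length = n ∧ RightSpecial u w ∧ (rightExt u w).ncard = m ∧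
      ∀ v, IsFactor u v → v.length = n → RightSpecial u v → v = w)

theorem Recurrent.exists_extension_of_encard_returnWords_ne [Finite A] (hrec : Recurrent u)
    {z : List A} (hsp : HasUniqueSpecialFactor u m z.length) (hz : IsFactor u z)
    (hbad : (returnWords u z).encard ≠ m) :
    ∃ z' s, IsFactor u z' ∧ z'.length = z.length + 1 ∧ (returnWords u z').encard ≠ m ∧
      s ≤ 1 ∧ ∀ p, OccursAt u z' p ↔ OccursAt u z (p + s) := by
  have hfin : ∀ s : Set A, (s.ncard : ℕ∞) = s.encard := fun s => (Set.toFinite s).cast_ncard_eq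
  by_cases hR : RightSpecial u z
  swap
  · obtain ⟨b, hb⟩ := exists_occursAt_append_singleton_iff hz hR
    exact ⟨z ++ [b], 0, hz.imp fun p => (hb p).mpr, by simp, by rwa [returnWords_congr hb],
      zero_le_one, hb⟩
  rcases hsp with ⟨l, -, -, -, hlm, huniq⟩ | ⟨r, -, -, -, hrm, huniq⟩
  · by_cases hL : LeftSpecial u z
    · obtain rfl := huniq z hz rfl hL
      exact absurd (by rw [hrec.encard_returnWords_of_unique_leftSpecial huniq, ← hfin, hlm]) hbad
    obtain ⟨a, ha⟩ := hrec.exists_occursAt_cons_iff hz hL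
    obtain ⟨j, hj1, hj⟩ := hrec.exists_occursAt_ge hz 1
    exact ⟨a :: z, 1, ⟨j - 1, (ha _).mpr (by rwa [Nat.sub_add_cancel hj1])⟩, by simp,
      by rwa [hrec.encard_returnWords_cons ha], le_rfl, ha⟩
  · obtain rfl := huniq z hz rfl hR
    exact absurd (by rw [hrec.encard_returnWords_of_unique_rightSpecial huniq, ← hfin, hrm]) hbad

def BadExtension (u : ℕ → A) (m : ℕ) (w z : List A) (σ : ℕ) : Prop :=
  IsFactor u z ∧ (returnWords u z).encard ≠ m ∧ w.length + σ ≤ z.length ∧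
    ∀ p, OccursAt u z p ↔ OccursAt u w (p + σ)

variable {w z : List A} {σ : ℕ}

theorem BadExtension.exists_succ [Finite A] (hrec : Recurrent u)
    (h : ∀ n, HasUniqueSpecialFactor u m n) (hz : BadExtension u m w z σ) :
    ∃ z' s, BadExtension u m w z' (σ + s) ∧ z.length < z'.length ∧ s ≤ 1 := by
  obtain ⟨hzf, hbad, hlen, hocc⟩ := hz
  obtain ⟨z', s, hz'f, hz'len, hbad', hs, hocc'⟩ :=
    hrec.exists_extension_of_encard_returnWords_ne (h _) hzf hbad
  refine ⟨z', s, ⟨hz'f, hbad', by omega, fun p => (hocc' p).trans ?_⟩, by omega, hs⟩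
  rw [hocc, Nat.add_assoc, Nat.add_comm s]

theorem BadExtension.exists_eq_or_exists_lt [Finite A] (hrec : Recurrent u)
    (h : ∀ n, HasUniqueSpecialFactor u m n) (hw : BadExtension u m w w 0) (P L : ℕ) :
    (∃ z, BadExtension u m w z P) ∨ ∃ z σ, BadExtension u m w z σ ∧ σ < P ∧ L ≤ z.length := by
  induction L with
  | zero =>
    rcases Nat.eq_zero_or_pos P with rfl | hP
    exacts [Or.inl ⟨w, hw⟩, Or.inr ⟨w, 0, hw, hP, Nat.zero_le _⟩]
  | succ L ih =>
    obtain hP | ⟨z, σ, hz, hσ, hL⟩ := ih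
    · exact Or.inl hP
    obtain ⟨z', s, hz', hlt, hs⟩ := hz.exists_succ hrec h
    rcases (show σ + s < P ∨ σ + s = P by omega) with hlt' | heq
    · exact Or.inr ⟨z', σ + s, hz', hlt', by omega⟩
    · exact Or.inl ⟨z', heq ▸ hz'⟩

theorem BadExtension.apply_add_eq_apply {q d i : ℕ} (hz : BadExtension u m w z σ)
    (hq : OccursAt u w q) (hqd : OccursAt u w (q + d)) (hσ : σ ≤ q) (hi : q - σ ≤ i)
    (hi' : i < q - σ + z.length) : u (i + d) = u i := by
  obtain ⟨-, -, -, hocc⟩ := hz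
  have h1 : OccursAt u z (q - σ) := (hocc _).mpr (by rwa [Nat.sub_add_cancel hσ])
  have h2 : OccursAt u z (q - σ + d) :=
    (hocc _).mpr (by rwa [Nat.add_right_comm, Nat.sub_add_cancel hσ])
  have := factorAt_eq_factorAt_iff.mp (h1.factorAt_eq h2) (i - (q - σ)) (by omega)
  rw [show q - σ + (i - (q - σ)) = i by omega,
    show q - σ + d + (i - (q - σ)) = i + d by omega] at this
  exact this.symm

theorem Recurrent.eventuallyPeriodic_of_encard_returnWords_ne [Finite A] (hrec : Recurrent u)
    (h : ∀ n, HasUniqueSpecialFactor u m n) (hw : IsFactor u w)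
    (hbad : (returnWords u w).encard ≠ m) : EventuallyPeriodic u := by
  have hw0 : BadExtension u m w w 0 := ⟨hw, hbad, le_rfl, fun p => Iff.rfl⟩
  obtain ⟨d, hd, hpair⟩ := hrec.exists_occursAt_pair_ge hw
  refine ⟨d, hd, ?_⟩
  by_cases hunbounded : ∀ P, ∃ z, BadExtension u m w z P
  · refine ⟨0, fun i _ => ?_⟩
    obtain ⟨q, hiq, hq, hqd⟩ := hpair (i + 1)
    obtain ⟨z, hz⟩ := hunbounded q
    exact hz.apply_add_eq_apply hq hqd le_rfl (by omega) (by have := hz.2.2.1; omega)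
  · push Not at hunbounded
    obtain ⟨P, hP⟩ := hunbounded
    obtain ⟨q, hPq, hq, hqd⟩ := hpair P
    refine ⟨q, fun i hi => ?_⟩
    obtain ⟨z, σ, hz, hσ, hlen⟩ := (hw0.exists_eq_or_exists_lt hrec h P (i + 1)).resolve_left
      fun ⟨z, hz⟩ => hP z hz
    exact hz.apply_add_eq_apply hq hqd (by omega) (by omega) (by omega)

end ExtensionChain

/-- If `u` is recurrent and for every `n` there is a unique left special
factor of length `n`, with `m` left extensions, or a unique right special factor of
length `n`, with `m` right extensions, then `u` satisfies property `R_m`. -/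
theorem propertyR_of_unique_special [Fintype A] (u : ℕ → A) (m : ℕ) (hrec : Recurrent u)
    (h : ∀ n : ℕ,
      (∃ w, IsFactor u w ∧ w.length = n ∧ LeftSpecial u w ∧ (leftExt u w).ncard = m ∧
        ∀ v, IsFactor u v → v.length = n → LeftSpecial u v → v = w) ∨
      (∃ w, IsFactor u w ∧ w.length = n ∧ RightSpecial u w ∧ (rightExt u w).ncard = m ∧
        ∀ v, IsFactor u v → v.length = n → RightSpecial u v → v = w)) :
    PropertyR u m := by
  have hspecial : ∀ n, ∃ w : List A, w.length = n ∧ (LeftSpecial u w ∨ RightSpecial u w) := by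
    intro n
    rcases h n with ⟨w, -, hw, hL, -⟩ | ⟨w, -, hw, hR, -⟩
    exacts [⟨w, hw, Or.inl hL⟩, ⟨w, hw, Or.inr hR⟩]
  intro w hw
  have hm : (returnWords u w).encard = m := by
    by_contra hbad
    exact hrec.not_eventuallyPeriodic hspecial
      (hrec.eventuallyPeriodic_of_encard_returnWords_ne h hw hbad)
  exact ⟨Set.finite_of_encard_eq_coe hm, by rw [Set.ncard_def, hm, ENat.toNat_natCast]⟩
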